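/- arXiv:2011.00102 — 4 statements merged into one kernel-verified Lean document; each statement's English description precedes it below -/
import Mathlib

section
/- If γ/λ > log(1/(1−η)), then the triple (γ, η, λ) is feasible: for every N there exists M and a collection of sets A_1,...,A_N ⊆ [M], each of size M/(Nλ), such that every subset S of [N] of size γN satisfies |⋃_{i∈S} A_i| ≥ ηM. -/
open Finset

lemma card_filter_equiv {α β : Type*} [Fintype α] [Fintype β] (e : α ≃ β)
    (p : β → Prop) [DecidablePred p] :
    (univ.filter (fun x => p (e x))).card = (univ.filter p).card := by
  rw [← Fintype.card_subtype, ← Fintype.card_subtype]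
  exact Fintype.card_congr (e.subtypeEquiv (fun a => Iff.rfl))

lemma card_filter_pi {N b : ℕ} (T : Finset (Fin b)) (S : Finset (Fin N)) :
    (univ.filter (fun f : Fin N → Fin b => ∀ i ∈ S, f i ∈ T)).card
      = T.card ^ S.card * b ^ (N - S.card) := by
  have h : univ.filter (fun f : Fin N → Fin b => ∀ i ∈ S, f i ∈ T)
      = Fintype.piFinset (fun j => if j ∈ S then T else univ) := by
    ext f
    simp only [mem_filter, mem_univ, true_and, Fintype.mem_piFinset]
    constructor
    · intro h j
      split
      · exact h j ‹_›
      · simp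
    · intro h i hi
      have := h i; rwa [if_pos hi] at this
  rw [h, Fintype.card_piFinset]
  have h2 : ∀ j : Fin N, (if j ∈ S then T else univ).card = if j ∈ S then T.card else b := by
    intro j; split <;> simp
  simp only [h2]
  rw [Finset.prod_ite, Finset.prod_const, Finset.prod_const]
  congr 1
  · congr 1; simp
  · congr 1
    have : univ.filter (fun j => ¬ j ∈ S) = Sᶜ := by ext x; simp
    rw [this, Finset.card_compl, Fintype.card_fin]



/-- Feasibility direction of the ACeD dispersal lemma: if `γ/λ > log(1/(1−η))`, then
for every `N` there exists `M` and sets `A_1, …, A_N ⊆ [M]`, each of size at most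
`M/(Nλ)`, such that any at least `γN` of them jointly cover at least `ηM` chunks. -/
theorem stmt_1 (γ η lam : ℝ)
    (hγ0 : 0 < γ) (hγ1 : γ < 1) (hη0 : 0 < η) (hη1 : η < 1)
    (hlam0 : 0 < lam) (hlam1 : lam < 1)
    (hgt : γ / lam > Real.log (1 / (1 - η))) :
    ∀ N : ℕ, 0 < N →
      ∃ M : ℕ, 0 < M ∧
        ∃ A : Fin N → Finset (Fin M),
          (∀ i, ((A i).card : ℝ) ≤ M / (N * lam)) ∧
          (∀ S : Finset (Fin N), γ * N ≤ (S.card : ℝ) →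
            η * M ≤ ((S.biUnion A).card : ℝ)) := by
  intro N hN
  have hNpos : (0:ℝ) < N := by exact_mod_cast hN
  by_cases hNl : (N:ℝ) * lam ≤ 1
  · -- trivial case: sets can be the whole universe
    refine ⟨1, one_pos, fun _ => Finset.univ, ?_, ?_⟩
    · intro i
      have h1 : (0:ℝ) < N * lam := by positivity
      simp only [Finset.card_univ, Fintype.card_fin, Nat.cast_one]
      rw [le_div_iff₀ h1]
      linarith
    · intro S hS
      have hSne : S.Nonempty := by
        rw [← Finset.card_pos]
        by_contra h
        push_neg at h
        have hc : S.card = 0 := by omega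
        rw [hc] at hS
        push_cast at hS
        nlinarith
      obtain ⟨i0, hi0⟩ := hSne
      have : (0:Fin 1) ∈ S.biUnion (fun _ => Finset.univ) :=
        Finset.mem_biUnion.mpr ⟨i0, hi0, Finset.mem_univ _⟩
      have h1 : 1 ≤ (S.biUnion (fun _ => (Finset.univ : Finset (Fin 1)))).card :=
        Finset.card_pos.mpr ⟨0, this⟩
      have : (1:ℝ) ≤ ((S.biUnion (fun _ => (Finset.univ : Finset (Fin 1)))).card : ℝ) := by
        exact_mod_cast h1
      push_cast
      nlinarith
  · push_neg at hNl
    set L := Real.log (1 / (1 - η)) with hLdef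
    have hη1' : (0:ℝ) < 1 - η := by linarith
    have hL0 : 0 < L := Real.log_pos (by rw [lt_div_iff₀ hη1']; linarith)
    have hLγ : L * lam < γ := by
      rw [gt_iff_lt, lt_div_iff₀ hlam0] at hgt; linarith
    have hint : L / (γ * N) < 1 / (N * lam) := by
      rw [div_lt_div_iff₀ (by positivity) (by positivity)]
      nlinarith
    obtain ⟨q, hq1, hq2⟩ := exists_rat_btwn hint
    have hq0R : (0:ℝ) < (q:ℝ) := lt_trans (by positivity) hq1
    have hq0 : 0 < q := by exact_mod_cast hq0R
    have hq1R : (q:ℝ) < 1 := by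
      have : 1 / ((N:ℝ) * lam) < 1 := by
        rw [div_lt_one (by positivity)]; exact hNl
      linarith
    have hqlt1 : q < 1 := by exact_mod_cast hq1R
    set a := q.num.toNat with hadef
    set b := q.den with hbdef
    have hb0 : 0 < b := q.pos
    have haz : (a:ℤ) = q.num := Int.toNat_of_nonneg (Rat.num_pos.mpr hq0).le
    have hbR : (0:ℝ) < b := by exact_mod_cast hb0
    have hcast : (q:ℝ) = (a:ℝ) / (b:ℝ) := by
      rw [Rat.cast_def]
      congr 1
      exact_mod_cast haz.symm
    have hab : a < b := by
      have h := hq1R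
      rw [hcast, div_lt_one hbR] at h
      exact_mod_cast h
    set p : ℝ := (a:ℝ)/(b:ℝ) with hpdef
    refine ⟨b ^ N, pow_pos hb0 N, ?_⟩
    set e : Fin (b ^ N) ≃ (Fin N → Fin b) :=
      (Fintype.equivFinOfCardEq (by simp [Fintype.card_fun])).symm with hedef
    set av : Fin b := ⟨a, hab⟩ with havdef
    refine ⟨fun i => univ.filter (fun x => e x i < av), ?_, ?_⟩
    · -- cardinality bound
      intro i
      have hcardA : (univ.filter (fun x : Fin (b^N) => e x i < av)).card
          = a * b ^ (N - 1) := by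
        rw [card_filter_equiv e (fun f => f i < av)]
        have : (univ.filter (fun f : Fin N → Fin b => f i < av))
            = univ.filter (fun f : Fin N → Fin b => ∀ j ∈ ({i} : Finset (Fin N)), f j ∈ Finset.Iio av) := by
          ext f; simp
        rw [this, card_filter_pi, Fin.card_Iio, Finset.card_singleton, pow_one]
      rw [hcardA]
      have hb1 : (b:ℝ) ^ N = (b:ℝ) * (b:ℝ) ^ (N - 1) := by
        rw [← pow_succ']
        congr 1
        omega
      have hkey : (a:ℝ) ≤ (b:ℝ) / (N * lam) := by
        rw [le_div_iff₀ (by positivity)]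
        have : p < 1 / ((N:ℝ) * lam) := by rw [← hcast]; exact hq2
        rw [hpdef, div_lt_div_iff₀ hbR (by positivity)] at this
        linarith
      push_cast
      rw [hb1]
      calc (a:ℝ) * (b:ℝ) ^ (N-1) ≤ ((b:ℝ) / (N * lam)) * (b:ℝ)^(N-1) := by
            apply mul_le_mul_of_nonneg_right hkey (by positivity)
        _ = (b:ℝ) * (b:ℝ)^(N-1) / (N * lam) := by ring
    · -- coverage bound
      intro S hS
      set k := S.card with hkdef
      have hkN : k ≤ N := by
        have := Finset.card_le_univ S
        simpa using this
      have hcompl : (S.biUnion (fun i => univ.filter (fun x => e x i < av)))ᶜ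
          = univ.filter (fun x : Fin (b^N) => ∀ i ∈ S, e x i ∈ Finset.Ici av) := by
        ext x
        simp only [Finset.mem_compl, Finset.mem_biUnion, mem_filter, mem_univ, true_and,
          Finset.mem_Ici]
        push_neg
        rfl
      have hcardc : ((S.biUnion (fun i => univ.filter (fun x => e x i < av)))ᶜ).card
          = (b - a) ^ k * b ^ (N - k) := by
        rw [hcompl, card_filter_equiv e (fun f => ∀ i ∈ S, f i ∈ Finset.Ici av),
          card_filter_pi, Fin.card_Ici]
      have hcardU : (S.biUnion (fun i => univ.filter (fun x => e x i < av))).card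
          = b ^ N - (b - a) ^ k * b ^ (N - k) := by
        have h1 := Finset.card_compl (S.biUnion (fun i => univ.filter (fun x => e x i < av)))
        rw [hcardc, Fintype.card_fin] at h1
        have h2 : (S.biUnion (fun i => univ.filter (fun x => e x i < av))).card ≤ b ^ N := by
          simpa using Finset.card_le_univ (S.biUnion (fun i => univ.filter (fun x => e x i < av)))
        omega
      rw [hcardU]
      have hle : (b - a) ^ k * b ^ (N - k) ≤ b ^ N := by
        calc (b-a)^k * b^(N-k) ≤ b^k * b^(N-k) := by
              apply Nat.mul_le_mul_right
              exact Nat.pow_le_pow_left (Nat.sub_le b a) k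
          _ = b ^ N := by rw [← pow_add]; congr 1; omega
      rw [Nat.cast_sub hle]
      -- now the real inequality
      have hmiss : (((b - a) ^ k * b ^ (N - k) : ℕ) : ℝ) ≤ (1 - η) * (b:ℝ) ^ N := by
        have hba : ((b - a : ℕ) : ℝ) = (b:ℝ) * (1 - p) := by
          rw [Nat.cast_sub hab.le, hpdef]
          field_simp
        push_cast
        rw [hba, mul_pow, mul_comm ((b:ℝ)^k) _, mul_assoc, ← pow_add]
        have hNk : k + (N - k) = N := by omega
        rw [hNk]
        have hp1 : p ≤ 1 := by rw [← hcast]; exact hq1R.le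
        have hp0 : 0 ≤ p := by positivity
        have step1 : (1 - p) ^ k ≤ Real.exp (-p) ^ k := by
          apply pow_le_pow_left₀ (by linarith)
          linarith [Real.add_one_le_exp (-p)]
        have step2 : Real.exp (-p) ^ k = Real.exp ((k:ℝ) * (-p)) := by
          rw [Real.exp_nat_mul]
        have hLk : L ≤ (k:ℝ) * p := by
          have h1 : L < γ * N * p := by
            have := hq1
            rw [hcast] at this
            rw [div_lt_iff₀ (by positivity)] at this
            linarith
          have h2 : γ * N * p ≤ (k:ℝ) * p := by
            apply mul_le_mul_of_nonneg_right hS hp0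
          linarith
        have step3 : Real.exp ((k:ℝ) * (-p)) ≤ Real.exp (-L) := by
          apply Real.exp_le_exp.mpr
          nlinarith
        have step4 : Real.exp (-L) = 1 - η := by
          rw [hLdef, one_div, Real.log_inv, neg_neg, Real.exp_log hη1']
        have : (1 - p) ^ k ≤ 1 - η := by
          calc (1-p)^k ≤ Real.exp (-p) ^ k := step1
            _ = Real.exp ((k:ℝ) * (-p)) := step2
            _ ≤ Real.exp (-L) := step3
            _ = 1 - η := step4
        apply mul_le_mul_of_nonneg_right this (by positivity)
      have hBN : ((b^N : ℕ):ℝ) = (b:ℝ)^N := by push_cast; ring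
      rw [hBN]
      linarith
end

section
/- For a randomized chunk dispersal where each of the N nodes independently receives M/(Nλ) chunks drawn i.i.d. uniformly from [M], the probability that the resulting collection fails to be a valid (M, N, γ, η, λ) dispersal code is at most exp(N·H_e(γ) − M·f(η, γ/λ)), where H_e is the binary entropy in nats and f(η,ρ) = (e^ρ(1−η)−1)²/(e^ρ(e^ρ(1−η)+1)), provided γ/λ > log(1/(1−η)). -/
open scoped Classical

open Finset


lemma log_ge_aux {x : ℝ} (hx : 1 ≤ x) : 2*(x-1)/(x+1) ≤ Real.log x := by
  have hx0 : (0:ℝ) < x := lt_of_lt_of_le one_pos hx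
  set g : ℝ → ℝ := fun x => (x+1) * Real.log x - 2*(x-1) with hg
  have hderiv : ∀ y ∈ Set.Ioi (1:ℝ), HasDerivAt g (Real.log y + 1/y - 1) y := by
    intro y hy
    have hy0 : (0:ℝ) < y := lt_trans one_pos hy
    have h1 : HasDerivAt (fun x : ℝ => (x+1) * Real.log x)
        (1 * Real.log y + (y+1) * y⁻¹) y := by
      exact (((hasDerivAt_id y).add_const 1)).mul (Real.hasDerivAt_log hy0.ne')
    have h2 : HasDerivAt (fun x : ℝ => 2*(x-1)) 2 y := by
      simpa using ((hasDerivAt_id y).sub_const 1).const_mul 2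
    have := h1.sub h2
    refine this.congr_deriv ?_
    rw [add_mul, mul_inv_cancel₀ hy0.ne']
    ring
  have hmono : MonotoneOn g (Set.Ici (1:ℝ)) := by
    apply monotoneOn_of_deriv_nonneg (convex_Ici 1)
    · apply ContinuousOn.sub
      · exact (continuousOn_id.add continuousOn_const).mul
          (Real.continuousOn_log.mono (by intro y hy; simp at hy ⊢; positivity))
      · fun_prop
    · rw [interior_Ici]
      intro y hy
      exact (hderiv y hy).differentiableAt.differentiableWithinAt
    · rw [interior_Ici]
      intro y hy
      rw [(hderiv y hy).deriv]
      have hy1 : (1:ℝ) ≤ y := le_of_lt hy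
      have hy0 : (0:ℝ) < y := lt_of_lt_of_le one_pos hy1
      have := Real.one_sub_inv_le_log_of_pos hy0
      rw [inv_eq_one_div] at this
      linarith
  have h1 : g 1 ≤ g x := hmono (by simp) (by simpa using hx) hx
  have : (0:ℝ) ≤ (x+1) * Real.log x - 2*(x-1) := by simpa [hg] using h1
  rw [div_le_iff₀ (by linarith : (0:ℝ) < x+1)]
  linarith

lemma key_ineq {x : ℝ} (hx : 1 ≤ x) : (x-1)^2/(x+1) ≤ x * Real.log x - x + 1 := by
  have hx1 : (0:ℝ) < x + 1 := by linarith
  have hx0 : (0:ℝ) < x := lt_of_lt_of_le one_pos hx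
  have h := log_ge_aux hx
  have h2 : 2*(x-1) ≤ Real.log x * (x+1) := by
    rw [div_le_iff₀ hx1] at h; linarith
  have h3 : 2*(x-1)*x ≤ Real.log x * (x+1) * x :=
    mul_le_mul_of_nonneg_right h2 hx0.le
  rw [div_le_iff₀ hx1]
  nlinarith [h3]


lemma sum_powerset_pow_card {β : Type*} [DecidableEq β] (E : Finset β) (u : ℝ) :
    ∑ T ∈ E.powerset, u ^ T.card = (1 + u) ^ E.card := by
  have h := Finset.prod_add (fun _ : β => u) (fun _ : β => (1:ℝ)) E
  simp only [Finset.prod_const, Finset.prod_const_one, one_pow, mul_one] at h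
  rw [add_comm 1 u, h]

lemma card_filter_forall_mem {ι β : Type*} [Fintype ι] [DecidableEq ι] [Fintype β]
    [DecidableEq β] (S : Finset ι) (Q : Finset β) :
    (Finset.univ.filter (fun f : ι → β => ∀ i ∈ S, f i ∈ Q)).card
      = Q.card ^ S.card * (Fintype.card β) ^ Sᶜ.card := by
  have heq : (Finset.univ.filter (fun f : ι → β => ∀ i ∈ S, f i ∈ Q))
      = Fintype.piFinset (fun i => if i ∈ S then Q else Finset.univ) := by
    ext f
    simp only [Finset.mem_filter, Finset.mem_univ, true_and, Fintype.mem_piFinset]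
    constructor
    · intro h i; by_cases hi : i ∈ S <;> simp [hi, h i]
    · intro h i hi; have := h i; simpa [hi] using this
  rw [heq, Fintype.card_piFinset, ← Finset.prod_mul_prod_compl S]
  have h1 : ∏ i ∈ S, (if i ∈ S then Q else Finset.univ).card = Q.card ^ S.card := by
    rw [Finset.prod_congr rfl (fun i hi => by rw [if_pos hi]), Finset.prod_const]
  have h2 : ∏ i ∈ Sᶜ, (if i ∈ S then Q else Finset.univ).card
      = (Fintype.card β) ^ Sᶜ.card := by
    rw [Finset.prod_congr rfl (fun i hi => by rw [if_neg (Finset.mem_compl.mp hi)]),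
      Finset.prod_const, Finset.card_univ]
  rw [h1, h2]

lemma mgf_bound (M N k : ℕ) (hM : 0 < M) (S : Finset (Fin N)) (u : ℝ) (hu : 0 ≤ u) :
    ∑ A : Fin N → Fin k → Fin M,
      ((1:ℝ)+u) ^ ((S.biUnion fun i => Finset.univ.image (A i))ᶜ.card)
    ≤ (M:ℝ)^(N*k) * (1 + u*(1-(M:ℝ)⁻¹)^(S.card*k))^M := by
  have hstep1 : ∀ E : Finset (Fin M), ((1:ℝ)+u)^(E.card)
      = ∑ T : Finset (Fin M), if T ⊆ E then u^T.card else 0 := by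
    intro E
    rw [← sum_powerset_pow_card,
      show E.powerset = Finset.univ.filter (· ⊆ E) from by ext; simp,
      Finset.sum_filter]
  simp_rw [hstep1]
  rw [Finset.sum_comm]
  -- now bound each T-term
  have hcount : ∀ T : Finset (Fin M),
      (∑ A : Fin N → Fin k → Fin M,
        if T ⊆ (S.biUnion fun i => Finset.univ.image (A i))ᶜ then u^T.card else 0)
      = u^T.card * ((((M - T.card)^k)^S.card * ((M^k)^(Sᶜ.card)) : ℕ) : ℝ) := by
    intro T
    have hcond : ∀ A : Fin N → Fin k → Fin M,
        (T ⊆ (S.biUnion fun i => Finset.univ.image (A i))ᶜ)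
        ↔ (∀ i ∈ S, A i ∈ (Finset.univ.filter (fun B : Fin k → Fin M => ∀ j, B j ∉ T))) := by
      intro A
      constructor
      · intro h i hi
        simp only [Finset.mem_filter, Finset.mem_univ, true_and]
        intro j hj
        have := h hj
        rw [Finset.mem_compl] at this
        exact this (Finset.mem_biUnion.mpr ⟨i, hi, Finset.mem_image.mpr ⟨j, Finset.mem_univ _, rfl⟩⟩)
      · intro h x hx
        rw [Finset.mem_compl]
        intro hcov
        obtain ⟨i, hi, hx'⟩ := Finset.mem_biUnion.mp hcov
        obtain ⟨j, _, rfl⟩ := Finset.mem_image.mp hx'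
        exact (Finset.mem_filter.mp (h i hi)).2 j hx
    simp_rw [hcond]
    rw [← Finset.sum_filter, Finset.sum_const, nsmul_eq_mul, mul_comm]
    congr 1
    have hq : (Finset.univ.filter (fun B : Fin k → Fin M => ∀ j, B j ∉ T))
        = Finset.univ.filter (fun B : Fin k → Fin M => ∀ j ∈ Finset.univ, B j ∈ Tᶜ) := by
      ext B; simp
    have h1 := card_filter_forall_mem (β := Fin k → Fin M) S
      (Finset.univ.filter (fun B : Fin k → Fin M => ∀ j, B j ∉ T))
    have h2 : (Finset.univ.filter (fun B : Fin k → Fin M => ∀ j, B j ∉ T)).card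
        = (M - T.card)^k := by
      have ha : (Finset.univ.filter (fun f : Fin k → Fin M => ∀ j ∈ Finset.univ, f j ∈ Tᶜ)).card
          = (M - T.card)^k := by
        refine Eq.trans ?_ ((card_filter_forall_mem (ι := Fin k) Finset.univ Tᶜ).trans
          (by simp [Finset.card_compl]))
        congr
      rw [hq, ← ha]
    have hcardfun : Fintype.card (Fin k → Fin M) = M^k := by simp
    have h3 := h1.trans (by rw [h2, hcardfun])
    norm_cast
    rw [← h3]
    congr
  simp_rw [hcount]
  -- bound each term
  have hMR : (0:ℝ) < (M:ℝ) := by exact_mod_cast hM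
  set P : ℝ := (1-(M:ℝ)⁻¹)^(S.card*k) with hP
  have hP0 : (0:ℝ) ≤ 1-(M:ℝ)⁻¹ := by
    rw [sub_nonneg, inv_le_one_iff₀]
    right; exact_mod_cast hM
  have hterm : ∀ T : Finset (Fin M),
      u^T.card * ((((M - T.card)^k)^S.card * ((M^k)^(Sᶜ.card)) : ℕ) : ℝ)
      ≤ (u*P)^T.card * (M:ℝ)^(N*k) := by
    intro T
    have htM : T.card ≤ M := by
      simpa using Finset.card_le_card (Finset.subset_univ T)
    have hsN : S.card ≤ N := by
      simpa using Finset.card_le_card (Finset.subset_univ S)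
    have hcast : (((M - T.card : ℕ)) : ℝ) = (M:ℝ) - T.card := by
      push_cast [htM]; ring
    have hbern : (1:ℝ) + (T.card : ℝ) * (-(M:ℝ)⁻¹) ≤ (1 + (-(M:ℝ)⁻¹))^T.card := by
      apply one_add_mul_le_pow
      have : (M:ℝ)⁻¹ ≤ 1 := by
        rw [inv_le_one_iff₀]; right; exact_mod_cast hM
      linarith
    have hbase : (M:ℝ) - T.card ≤ (M:ℝ) * (1-(M:ℝ)⁻¹)^T.card := by
      have h2 : (M:ℝ) * (1 + (T.card : ℝ) * (-(M:ℝ)⁻¹))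
          ≤ (M:ℝ) * (1 + (-(M:ℝ)⁻¹))^T.card :=
        mul_le_mul_of_nonneg_left hbern hMR.le
      calc (M:ℝ) - T.card = (M:ℝ) * (1 + (T.card : ℝ) * (-(M:ℝ)⁻¹)) := by
            field_simp; ring
          _ ≤ (M:ℝ) * (1 + (-(M:ℝ)⁻¹))^T.card := h2
          _ = (M:ℝ) * (1-(M:ℝ)⁻¹)^T.card := by ring_nf
    have hbase0 : (0:ℝ) ≤ (M:ℝ) - T.card := by
      rw [sub_nonneg]; exact_mod_cast htM
    have hpow : ((M:ℝ) - T.card)^(S.card*k)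
        ≤ ((M:ℝ) * (1-(M:ℝ)⁻¹)^T.card)^(S.card*k) :=
      pow_le_pow_left₀ hbase0 hbase _
    have hexpand : ((M:ℝ) * (1-(M:ℝ)⁻¹)^T.card)^(S.card*k)
        = (M:ℝ)^(S.card*k) * P^T.card := by
      rw [mul_pow, hP, ← pow_mul, ← pow_mul, mul_comm T.card (S.card*k)]
    push_cast [hcast]
    rw [← pow_mul, show k * S.card = S.card * k from Nat.mul_comm k S.card]
    calc u^T.card * (((M:ℝ) - T.card)^(S.card*k) * ((M:ℝ)^k)^(Sᶜ.card))
        ≤ u^T.card * (((M:ℝ)^(S.card*k) * P^T.card) * ((M:ℝ)^k)^(Sᶜ.card)) := by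
          apply mul_le_mul_of_nonneg_left _ (pow_nonneg hu _)
          apply mul_le_mul_of_nonneg_right _ (by positivity)
          rw [← hexpand]; exact hpow
      _ = (u*P)^T.card * ((M:ℝ)^(S.card*k) * ((M:ℝ)^k)^(Sᶜ.card)) := by
          rw [mul_pow]; ring
      _ = (u*P)^T.card * (M:ℝ)^(N*k) := by
          congr 1
          rw [← pow_mul, ← pow_add]
          congr 1
          have hc : Sᶜ.card = N - S.card := by
            simp [Finset.card_compl]
          rw [hc]
          zify [hsN]
          ring
  calc ∑ T : Finset (Fin M),
        u^T.card * ((((M - T.card)^k)^S.card * ((M^k)^(Sᶜ.card)) : ℕ) : ℝ)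
      ≤ ∑ T : Finset (Fin M), (u*P)^T.card * (M:ℝ)^(N*k) :=
        Finset.sum_le_sum (fun T _ => hterm T)
    _ = (M:ℝ)^(N*k) * (1 + u*P)^M := by
        rw [← Finset.sum_mul, mul_comm]
        congr 1
        have : ∑ T : Finset (Fin M), (u*P)^T.card
            = ∑ T ∈ (Finset.univ : Finset (Fin M)).powerset, (u*P)^T.card := by
          rw [Finset.powerset_univ]
        rw [this, sum_powerset_pow_card]
        simp


lemma choose_bound (N s : ℕ) (γ : ℝ) (hγ0 : 0 < γ) (hγ1 : γ < 1) (hN : 0 < N)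
    (hs : (s:ℝ) = γ * N) :
    (N.choose s : ℝ) ≤ Real.exp (N * (-(γ * Real.log γ) - (1 - γ) * Real.log (1 - γ))) := by
  have hNR : (0:ℝ) < N := by exact_mod_cast hN
  have hsle : s ≤ N := by
    have h1 : (s:ℝ) ≤ N := by rw [hs]; nlinarith
    exact_mod_cast h1
  have h1γ : (0:ℝ) < 1 - γ := by linarith
  have hsum : ∑ j ∈ Finset.range (N+1), γ^j * (1-γ)^(N-j) * (N.choose j) = 1 := by
    have h := add_pow γ (1-γ) N
    simp only [add_sub_cancel, one_pow] at h
    rw [← h]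
  have hterm : γ^s * (1-γ)^(N-s) * (N.choose s) ≤ 1 := by
    refine le_trans (Finset.single_le_sum (f := fun j => γ^j * (1-γ)^(N-j) * (N.choose j))
      (fun j _ => mul_nonneg (mul_nonneg (pow_nonneg hγ0.le _) (pow_nonneg h1γ.le _))
        (Nat.cast_nonneg _))
      (Finset.mem_range.mpr (Nat.lt_succ_of_le hsle))) hsum.le
  have hpos : (0:ℝ) < γ^s * (1-γ)^(N-s) := mul_pos (pow_pos hγ0 _) (pow_pos h1γ _)
  have hchoose : (N.choose s : ℝ) ≤ (γ^s * (1-γ)^(N-s))⁻¹ := by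
    rw [inv_eq_one_div, le_div_iff₀ hpos, mul_comm]
    exact hterm
  refine hchoose.trans (le_of_eq ?_)
  have hlog : γ^s * (1-γ)^(N-s)
      = Real.exp (N * (γ * Real.log γ + (1-γ) * Real.log (1-γ))) := by
    rw [← Real.exp_log (pow_pos hγ0 s), ← Real.exp_log (pow_pos (by linarith : (0:ℝ) < 1-γ) (N-s)),
      ← Real.exp_add, Real.log_pow, Real.log_pow]
    congr 1
    have hns : ((N - s : ℕ):ℝ) = (1-γ) * N := by
      push_cast [hsle]
      rw [hs]; ring
    rw [hns, hs]
    ring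
  rw [hlog, ← Real.exp_neg]
  congr 1
  ring

/-- Probabilistic-method bound for randomized chunk dispersal: if each of `N` nodes
receives `k = M/(Nλ)` chunks drawn i.i.d. uniformly from `[M]`, then the probability
that the collection fails to be a valid `(M, N, γ, η, λ)` dispersal code is at most
`exp(N·H_e(γ) − M·f(η, γ/λ))`, provided `γ/λ > log(1/(1−η))`, where `H_e` is the
binary entropy in nats and `f(η,ρ) = (e^ρ(1−η)−1)²/(e^ρ(e^ρ(1−η)+1))`. -/
theorem stmt_3 (M N k s : ℕ) (γ η lam : ℝ)
    (hM : 0 < M) (hN : 0 < N)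
    (hγ0 : 0 < γ) (hγ1 : γ < 1) (hη0 : 0 < η) (hη1 : η < 1) (hlam : 0 < lam)
    (hk : (k : ℝ) = M / (N * lam))
    (hs : (s : ℝ) = γ * N)
    (hgt : γ / lam > Real.log (1 / (1 - η))) :
    ((Finset.univ.filter
        (fun A : Fin N → Fin k → Fin M =>
          ∃ S : Finset (Fin N), S.card = s ∧
            ((S.biUnion fun i => (Finset.univ : Finset (Fin k)).image (A i)).card : ℝ)
              < η * M)).card : ℝ)
      / (M : ℝ) ^ (N * k)
    ≤ Real.exp (N * (-(γ * Real.log γ) - (1 - γ) * Real.log (1 - γ))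
        - M * ((Real.exp (γ / lam) * (1 - η) - 1) ^ 2 /
            (Real.exp (γ / lam) * (Real.exp (γ / lam) * (1 - η) + 1)))) := by
  have hMR : (0:ℝ) < M := by exact_mod_cast hM
  have hNR : (0:ℝ) < N := by exact_mod_cast hN
  have hq0 : (0:ℝ) < 1 - η := by linarith
  set ρ : ℝ := γ / lam with hρ
  have hx1 : 1 < Real.exp ρ * (1 - η) := by
    have h1 : 1/(1-η) < Real.exp ρ := by
      rw [← Real.exp_log (by positivity : (0:ℝ) < 1/(1-η))]
      exact Real.exp_lt_exp.mpr hgt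
    rw [div_lt_iff₀ hq0] at h1
    linarith
  set x : ℝ := Real.exp ρ * (1 - η) with hxdef
  have hx0 : (0:ℝ) < x := by linarith
  have hlogx0 : 0 ≤ Real.log x := Real.log_nonneg hx1.le
  have hu : (0:ℝ) ≤ x - 1 := by linarith
  have hsk : ((s:ℝ) * k) = ρ * M := by
    rw [hs, hk, hρ]
    field_simp
  have hsleN : s ≤ N := by
    have : (s:ℝ) ≤ N := by rw [hs]; nlinarith
    exact_mod_cast this
  set q : ℝ := 1 - η with hqdef
  set B : ℝ := (M:ℝ)^(N*k) * Real.exp (M * ((x-1) * Real.exp (-ρ)))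
      / Real.exp (q * M * Real.log x) with hB
  -- per-S bound
  have hperS : ∀ S : Finset (Fin N), S.card = s →
      ((Finset.univ.filter (fun A : Fin N → Fin k → Fin M =>
        ((S.biUnion fun i => (Finset.univ : Finset (Fin k)).image (A i)).card : ℝ)
          < η * M)).card : ℝ) ≤ B := by
    intro S hScard
    have hmgf := mgf_bound M N k hM S (x-1) hu
    -- pointwise: for A in the filter, exp(q M log x) ≤ (1+(x-1))^(complement card)
    have hpoint : ∀ A : Fin N → Fin k → Fin M,
        ((S.biUnion fun i => (Finset.univ : Finset (Fin k)).image (A i)).card : ℝ) < η * M →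
        Real.exp (q * M * Real.log x)
          ≤ (1+(x-1)) ^ ((S.biUnion fun i => (Finset.univ : Finset (Fin k)).image (A i))ᶜ.card) := by
      intro A hA
      have hcovle : (S.biUnion fun i => (Finset.univ : Finset (Fin k)).image (A i)).card ≤ M := by
        simpa using Finset.card_le_card
          (Finset.subset_univ (S.biUnion fun i => (Finset.univ : Finset (Fin k)).image (A i)))
      have hcompl : (((S.biUnion fun i => (Finset.univ : Finset (Fin k)).image (A i))ᶜ.card : ℕ) : ℝ)
          = M - (S.biUnion fun i => (Finset.univ : Finset (Fin k)).image (A i)).card := by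
        rw [Finset.card_compl, Fintype.card_fin]
        exact Nat.cast_sub hcovle
      have hxz : (1+(x-1)) ^ ((S.biUnion fun i => (Finset.univ : Finset (Fin k)).image (A i))ᶜ.card)
          = Real.exp ((((S.biUnion fun i => (Finset.univ : Finset (Fin k)).image (A i))ᶜ.card : ℕ):ℝ) * Real.log x) := by
        rw [show (1+(x-1)) = x by ring, Real.exp_nat_mul, Real.exp_log hx0]
      rw [hxz]
      apply Real.exp_le_exp.mpr
      apply mul_le_mul_of_nonneg_right _ hlogx0
      rw [hcompl, hqdef]
      linarith
    -- Chernoff extraction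
    have hchern : ((Finset.univ.filter (fun A : Fin N → Fin k → Fin M =>
          ((S.biUnion fun i => (Finset.univ : Finset (Fin k)).image (A i)).card : ℝ)
            < η * M)).card : ℝ) * Real.exp (q * M * Real.log x)
        ≤ ∑ A : Fin N → Fin k → Fin M,
          (1+(x-1)) ^ ((S.biUnion fun i => (Finset.univ : Finset (Fin k)).image (A i))ᶜ.card) := by
      rw [← nsmul_eq_mul, ← Finset.sum_const]
      refine le_trans (Finset.sum_le_sum (fun A hA => hpoint A (Finset.mem_filter.mp hA).2)) ?_
      exact Finset.sum_le_sum_of_subset_of_nonneg (Finset.filter_subset _ _)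
        (fun A _ _ => pow_nonneg (by linarith) _)
    -- bound RHS of mgf
    have hPe : (1 + (x-1)*(1-(M:ℝ)⁻¹)^(S.card*k))^M ≤ Real.exp (M * ((x-1) * Real.exp (-ρ))) := by
      have hm1 : (0:ℝ) ≤ 1-(M:ℝ)⁻¹ := by
        rw [sub_nonneg, inv_le_one_iff₀]; right; exact_mod_cast hM
      have h1 : (1:ℝ) - (M:ℝ)⁻¹ ≤ Real.exp (-(M:ℝ)⁻¹) := by
        have := Real.add_one_le_exp (-(M:ℝ)⁻¹); linarith
      have h2 : (1-(M:ℝ)⁻¹)^(S.card*k) ≤ Real.exp (-(M:ℝ)⁻¹)^(S.card*k) :=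
        pow_le_pow_left₀ hm1 h1 _
      have h3 : Real.exp (-(M:ℝ)⁻¹)^(S.card*k) = Real.exp (-ρ) := by
        rw [← Real.exp_nat_mul]
        congr 1
        have : ((S.card*k : ℕ):ℝ) = ρ * M := by
          push_cast [hScard]
          exact hsk
        rw [this]
        field_simp
      have h4 : (x-1)*(1-(M:ℝ)⁻¹)^(S.card*k) ≤ (x-1) * Real.exp (-ρ) := by
        apply mul_le_mul_of_nonneg_left _ hu
        rw [← h3]; exact h2
      have h5 : (1 + (x-1)*(1-(M:ℝ)⁻¹)^(S.card*k))^M ≤ (1 + (x-1) * Real.exp (-ρ))^M := by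
        apply pow_le_pow_left₀ _ (by linarith)
        positivity
      refine h5.trans ?_
      have h6 : 1 + (x-1) * Real.exp (-ρ) ≤ Real.exp ((x-1) * Real.exp (-ρ)) := by
        have := Real.add_one_le_exp ((x-1) * Real.exp (-ρ)); linarith
      calc (1 + (x-1) * Real.exp (-ρ))^M ≤ Real.exp ((x-1) * Real.exp (-ρ))^M := by
            apply pow_le_pow_left₀ (by positivity) h6
        _ = Real.exp (M * ((x-1) * Real.exp (-ρ))) := by rw [← Real.exp_nat_mul]
      done
    have hfinal := hchern.trans (hmgf.trans (mul_le_mul_of_nonneg_left hPe (by positivity)))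
    rw [hB, le_div_iff₀ (Real.exp_pos _)]
    exact hfinal
  -- union bound
  set F := (Finset.univ.filter
      (fun A : Fin N → Fin k → Fin M =>
        ∃ S : Finset (Fin N), S.card = s ∧
          ((S.biUnion fun i => (Finset.univ : Finset (Fin k)).image (A i)).card : ℝ)
            < η * M)) with hF
  have hsub : F ⊆ (Finset.univ.powersetCard s).biUnion
      (fun S => Finset.univ.filter (fun A : Fin N → Fin k → Fin M =>
        ((S.biUnion fun i => (Finset.univ : Finset (Fin k)).image (A i)).card : ℝ) < η * M)) := by
    intro A hA
    rw [hF, Finset.mem_filter] at hA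
    obtain ⟨-, S, hScard, hSlt⟩ := hA
    exact Finset.mem_biUnion.mpr ⟨S, Finset.mem_powersetCard_univ.mpr hScard,
      Finset.mem_filter.mpr ⟨Finset.mem_univ _, hSlt⟩⟩
  have hcardF : (F.card : ℝ) ≤ (N.choose s : ℝ) * B := by
    have h1 : F.card ≤ ∑ S ∈ Finset.univ.powersetCard s,
        (Finset.univ.filter (fun A : Fin N → Fin k → Fin M =>
          ((S.biUnion fun i => (Finset.univ : Finset (Fin k)).image (A i)).card : ℝ) < η * M)).card :=
      le_trans (Finset.card_le_card hsub) (Finset.card_biUnion_le)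
    have h2 : ((∑ S ∈ Finset.univ.powersetCard s,
        (Finset.univ.filter (fun A : Fin N → Fin k → Fin M =>
          ((S.biUnion fun i => (Finset.univ : Finset (Fin k)).image (A i)).card : ℝ) < η * M)).card : ℕ) : ℝ)
        ≤ (N.choose s : ℝ) * B := by
      push_cast
      refine le_trans (Finset.sum_le_sum (fun S hS =>
        hperS S (Finset.mem_powersetCard_univ.mp hS))) ?_
      rw [Finset.sum_const, nsmul_eq_mul]
      apply mul_le_mul_of_nonneg_right _ ?_
      · rw [Finset.card_powersetCard, Finset.card_univ, Fintype.card_fin]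
      · -- 0 ≤ B
        rw [hB]; positivity
    calc (F.card : ℝ) ≤ _ := by exact_mod_cast h1
      _ ≤ (N.choose s : ℝ) * B := h2
  -- assemble
  have hMpow : (0:ℝ) < (M:ℝ)^(N*k) := by positivity
  rw [div_le_iff₀ hMpow]
  refine hcardF.trans ?_
  rw [hB]
  have hchoose := choose_bound N s γ hγ0 hγ1 hN hs
  set H : ℝ := N * (-(γ * Real.log γ) - (1 - γ) * Real.log (1 - γ)) with hH
  set f : ℝ := (x - 1) ^ 2 / (Real.exp ρ * (x + 1)) with hf
  have hexp : Real.exp (M * ((x-1) * Real.exp (-ρ))) / Real.exp (q * M * Real.log x)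
      ≤ Real.exp (- (M * f)) := by
    rw [← Real.exp_sub, Real.exp_le_exp]
    have hkey := key_ineq hx1.le
    have hpρ : (0:ℝ) < Real.exp (-ρ) := Real.exp_pos _
    have hfx : f = Real.exp (-ρ) * ((x-1)^2/(x+1)) := by
      rw [hf, Real.exp_neg]
      rw [div_eq_mul_inv, div_eq_mul_inv]
      rw [mul_inv]
      ring
    have hqx : q = x * Real.exp (-ρ) := by
      rw [hxdef, hqdef, Real.exp_neg]
      field_simp
    have hmul := mul_le_mul_of_nonneg_left hkey hpρ.le
    rw [hqx, hfx]
    have hM0 : (0:ℝ) ≤ M := hMR.le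
    nlinarith [mul_le_mul_of_nonneg_left hmul hM0]
  calc (N.choose s : ℝ) * ((M:ℝ)^(N*k) * Real.exp (M * ((x-1) * Real.exp (-ρ)))
        / Real.exp (q * M * Real.log x))
      = (N.choose s : ℝ) * (Real.exp (M * ((x-1) * Real.exp (-ρ)))
        / Real.exp (q * M * Real.log x)) * (M:ℝ)^(N*k) := by ring
    _ ≤ Real.exp H * Real.exp (-(M*f)) * (M:ℝ)^(N*k) := by
        apply mul_le_mul_of_nonneg_right _ hMpow.le
        exact mul_le_mul hchoose hexp (div_nonneg (Real.exp_pos _).le (Real.exp_pos _).le) (Real.exp_pos _).le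
    _ = Real.exp (H - M*f) * (M:ℝ)^(N*k) := by rw [← Real.exp_add, sub_eq_add_neg]
end

section
/- With r, q, d, t = O(1), hash size y = O(1), symbol size c = Θ(log b), and b ≫ N, the ACeD per-node storage times N (communication complexity) N·X = N·y·t + b/(λr) + ((2q−1)·b·y/(c·r·λ))·log_{qr}(b/(c·t·r)) is O(b): there exist constants C and b₀ such that for all b ≥ b₀ (with N ≤ b), N·X ≤ C·b. -/
/-- ACeD communication complexity is `O(b)`: with constants `y, t, r, q, λ > 0`,
`qr > 1`, symbol size `c = c₀·log b`, and `N ≤ b`, there exist `C` and `b₀` such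
that for all `b ≥ b₀` and all `1 ≤ N ≤ b`,
`N·y·t + b/(λ·r) + ((2q−1)·b·y/(c·r·λ))·log_{qr}(b/(c·t·r)) ≤ C·b`. -/
theorem stmt_12 (y t r q lam c₀ : ℝ)
    (hy : 0 < y) (ht : 0 < t) (hr : 0 < r) (hq : 1 < q * r)
    (hlam : 0 < lam) (hc₀ : 0 < c₀) :
    ∃ C b₀ : ℝ, 0 < C ∧
      ∀ b : ℝ, b₀ ≤ b → ∀ N : ℝ, 1 ≤ N → N ≤ b →
        N * y * t + b / (lam * r)
          + ((2 * q - 1) * b * y / ((c₀ * Real.log b) * r * lam)) *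
              Real.logb (q * r) (b / ((c₀ * Real.log b) * t * r))
        ≤ C * b := by
  have hlqr : 0 < Real.log (q * r) := Real.log_pos hq
  refine ⟨y * t + 1 / (lam * r) + max 0 (2 * q - 1) * y / (c₀ * r * lam * Real.log (q * r)) + 1,
    max (Real.exp (max 1 (1 / (c₀ * t * r)))) ((2 * c₀ * t * r) ^ 2 + 1), ?_, ?_⟩
  · have h1 : 0 ≤ max 0 (2 * q - 1) * y / (c₀ * r * lam * Real.log (q * r)) := by positivity
    have h2 : 0 < y * t := by positivity
    have h3 : 0 < 1 / (lam * r) := by positivity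
    linarith
  intro b hb N hN1 hNb
  have hctr : 0 < c₀ * t * r := by positivity
  have hbexp : Real.exp (max 1 (1 / (c₀ * t * r))) ≤ b :=
    le_trans (le_max_left _ _) hb
  have hbpos : 0 < b := lt_of_lt_of_le (Real.exp_pos _) hbexp
  have hLge : max 1 (1 / (c₀ * t * r)) ≤ Real.log b := by
    have := Real.log_le_log (Real.exp_pos _) hbexp
    rwa [Real.log_exp] at this
  have hL1 : 1 ≤ Real.log b := le_trans (le_max_left _ _) hLge
  have hLpos : 0 < Real.log b := lt_of_lt_of_le one_pos hL1
  set L := Real.log b with hLdef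
  have hLinv : 1 / (c₀ * t * r) ≤ L := le_trans (le_max_right _ _) hLge
  have hden1 : 1 ≤ c₀ * L * t * r := by
    rw [div_le_iff₀ hctr] at hLinv
    nlinarith
  -- log b ≤ 2 √b
  have hsqpos : 0 < Real.sqrt b := Real.sqrt_pos.mpr hbpos
  have hlogsqrt : Real.log (Real.sqrt b) = L / 2 := by
    rw [hLdef, Real.log_sqrt hbpos.le]
  have hlog2 : L ≤ 2 * Real.sqrt b := by
    have := Real.log_le_sub_one_of_pos hsqpos
    rw [hlogsqrt] at this
    linarith
  have hsq : (2 * c₀ * t * r) ^ 2 ≤ b := by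
    have : (2 * c₀ * t * r) ^ 2 + 1 ≤ b := le_trans (le_max_right _ _) hb
    linarith
  have hsqrtge : 2 * c₀ * t * r ≤ Real.sqrt b := by
    rw [show (2:ℝ) * c₀ * t * r = Real.sqrt ((2 * c₀ * t * r)^2) from
      (Real.sqrt_sq (by positivity)).symm]
    exact Real.sqrt_le_sqrt hsq
  have hsqsq : Real.sqrt b * Real.sqrt b = b := Real.mul_self_sqrt hbpos.le
  have h3 : c₀ * L * t * r ≤ b := by nlinarith
  -- the logb argument
  set x := b / (c₀ * L * t * r) with hxdef
  have hdenpos : 0 < c₀ * L * t * r := lt_of_lt_of_le one_pos hden1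
  have hx1 : 1 ≤ x := (one_le_div hdenpos).mpr h3
  have hxb : x ≤ b := by
    rw [hxdef, div_le_iff₀ hdenpos]
    nlinarith [hbpos.le]
  have hxpos : 0 < x := lt_of_lt_of_le one_pos hx1
  have hlogb_nonneg : 0 ≤ Real.logb (q * r) x :=
    Real.logb_nonneg hq hx1
  have hlogb_le : Real.logb (q * r) x ≤ L / Real.log (q * r) := by
    rw [Real.logb]
    have hlx : Real.log x ≤ L := Real.log_le_log hxpos hxb
    gcongr
  -- bound the third term
  have hA : (2 * q - 1) * b * y / (c₀ * L * r * lam) * Real.logb (q * r) x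
      ≤ max 0 (2 * q - 1) * y / (c₀ * r * lam * Real.log (q * r)) * b := by
    rcases le_or_gt (2 * q - 1) 0 with hq0 | hq0
    · have hAneg : (2 * q - 1) * b * y / (c₀ * L * r * lam) ≤ 0 := by
        apply div_nonpos_of_nonpos_of_nonneg
        · exact mul_nonpos_of_nonpos_of_nonneg
            (mul_nonpos_of_nonpos_of_nonneg hq0 hbpos.le) hy.le
        · positivity
      have : (2 * q - 1) * b * y / (c₀ * L * r * lam) * Real.logb (q * r) x ≤ 0 :=
        mul_nonpos_of_nonpos_of_nonneg hAneg hlogb_nonneg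
      have hC0 : 0 ≤ max 0 (2 * q - 1) * y / (c₀ * r * lam * Real.log (q * r)) * b := by
        positivity
      linarith
    · have hApos : 0 ≤ (2 * q - 1) * b * y / (c₀ * L * r * lam) := by positivity
      calc (2 * q - 1) * b * y / (c₀ * L * r * lam) * Real.logb (q * r) x
          ≤ (2 * q - 1) * b * y / (c₀ * L * r * lam) * (L / Real.log (q * r)) :=
            mul_le_mul_of_nonneg_left hlogb_le hApos
        _ = (2 * q - 1) * y / (c₀ * r * lam * Real.log (q * r)) * b := by
            have hLne : L ≠ 0 := ne_of_gt hLpos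
            have h1 : c₀ ≠ 0 := ne_of_gt hc₀
            have h2 : r ≠ 0 := ne_of_gt hr
            have h3 : lam ≠ 0 := ne_of_gt hlam
            have h4 : Real.log (q * r) ≠ 0 := ne_of_gt hlqr
            field_simp
        _ = max 0 (2 * q - 1) * y / (c₀ * r * lam * Real.log (q * r)) * b := by
            rw [max_eq_right hq0.le]
  have hNyt : N * y * t ≤ b * (y * t) := by
    have h := mul_le_mul_of_nonneg_right hNb (le_of_lt (mul_pos hy ht))
    calc N * y * t = N * (y * t) := by ring
      _ ≤ b * (y * t) := h
  have hb2 : b / (lam * r) = 1 / (lam * r) * b := by ring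
  have hexp : (y * t + 1 / (lam * r) + max 0 (2 * q - 1) * y / (c₀ * r * lam * Real.log (q * r)) + 1) * b
      = b * (y * t) + 1 / (lam * r) * b
        + max 0 (2 * q - 1) * y / (c₀ * r * lam * Real.log (q * r)) * b + b := by
    ring
  linarith [hbpos]
end

section
/- In the ACeD incentive game, if p_a·(stk_v + 1) − c_s > 0 and ηB/k > r_m + c_s, then All-Cooperate is a Nash equilibrium: E[utility | All-C] = ηB/k − r_m − c_s exceeds both the deviation payoff E[utility | deviator goes Offline] = 0 and E[utility | deviator Defects] = −p_a·stk_v + (1−p_a)·ηB/k − r_m. -/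
/-- All-Cooperate is a Nash equilibrium of the ACeD incentive game: with audit
probability `p_a`, stake `stk_v`, verification cost `c_s`, submission fee `r_m`,
oracle reward share `ηB` split among `k ≥ 1` signatures (with `ηB/k ≥ 1`), if
`p_a·(stk_v + 1) − c_s > 0` and `ηB/k > r_m + c_s`, then the cooperation payoff
`ηB/k − r_m − c_s` exceeds both the Offline deviation payoff `0` and the Defect
deviation payoff `−p_a·stk_v + (1−p_a)·ηB/k − r_m`. -/
theorem stmt_16 (p_a stk_v c_s r_m ηB : ℝ) (k : ℕ)
    (hk : 1 ≤ k) (hpa0 : 0 < p_a) (hpa1 : p_a ≤ 1)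
    (hstk : 0 < stk_v) (hcs : 0 < c_s) (hrm : 0 ≤ r_m) (hB : 0 < ηB)
    (hshare : 1 ≤ ηB / k)
    (h1 : 0 < p_a * (stk_v + 1) - c_s)
    (h2 : r_m + c_s < ηB / k) :
    0 < ηB / k - r_m - c_s ∧
    -p_a * stk_v + (1 - p_a) * (ηB / k) - r_m < ηB / k - r_m - c_s := by
  constructor
  · linarith
  · nlinarith [mul_le_mul_of_nonneg_left hshare (le_of_lt hpa0)]
end
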